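/- Let f, g : ℝ → ℝ be functions that are Lipschitz on [−π, π] with Lipschitz constants ℓ_f and ℓ_g respectively. Let T be a finite nonempty set of points of [−π, π] and Δ ≥ 0 be such that every ω ∈ [−π, π] lies within distance Δ of some point of T, and suppose |f(t) − g(t)| ≤ ε for every t ∈ T, where ε ≥ 0. For each integer k set r_f(k) = (1/(2π))·∫_{−π}^{π} f(ω)·exp(i·ω·k) dω and r_g(k) = (1/(2π))·∫_{−π}^{π} g(ω)·exp(i·ω·k) dω. Then for every natural number K and every integer k with |k| ≤ K, |r_g(k) − r_f(k)| ≤ ε + (ℓ_f + ℓ_g)·Δ; in particular, if ε > 0 then, with C = 1 + (ℓ_f + ℓ_g)·Δ/ε, one has max over all integers k with |k| ≤ K of |r_g(k) − r_f(k)| ≤ C·ε. -/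

import Mathlib

/-!
Every frequency is within `Δ` of a grid point, so the Lipschitz bounds and the triangle inequality
give `|f - g| ≤ ε + (ℓf + ℓg) Δ` on all of `[-π, π]`. The phase `e^{iωk}` is unimodular, so the
normalized integral defining each autocorrelation is bounded by this sup norm.
-/

open Real Complex Set MeasureTheory
open scoped NNReal

theorem nonneg_of_abs_sub_le_mul_abs_sub {f : ℝ → ℝ} {ℓ a b : ℝ} (hab : a ≠ b)
    (h : |f a - f b| ≤ ℓ * |a - b|) : 0 ≤ ℓ :=
  nonneg_of_mul_nonneg_left ((abs_nonneg _).trans h) (abs_pos.2 (sub_ne_zero.2 hab))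

theorem lipschitzOnWith_of_abs_sub_le {f : ℝ → ℝ} {s : Set ℝ} {ℓ : ℝ} (hℓ : 0 ≤ ℓ)
    (h : ∀ a ∈ s, ∀ b ∈ s, |f a - f b| ≤ ℓ * |a - b|) : LipschitzOnWith ℓ.toNNReal f s :=
  LipschitzOnWith.of_dist_le_mul fun a ha b hb => by
    simpa only [Real.dist_eq, Real.coe_toNNReal ℓ hℓ] using h a ha b hb

theorem LipschitzOnWith.dist_le_of_dist_le_at {α E : Type*} [PseudoMetricSpace α]
    [PseudoMetricSpace E] {f g : α → E} {s : Set α} {Kf Kg : ℝ≥0}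
    (hf : LipschitzOnWith Kf f s) (hg : LipschitzOnWith Kg g s) {x t : α} (hx : x ∈ s)
    (ht : t ∈ s) {Δ ε : ℝ} (hxt : dist x t ≤ Δ) (hft : dist (f t) (g t) ≤ ε) :
    dist (f x) (g x) ≤ ε + (Kf + Kg) * Δ :=
  calc dist (f x) (g x) ≤ dist (f x) (f t) + dist (f t) (g t) + dist (g t) (g x) :=
        dist_triangle4 _ _ _ _
    _ ≤ Kf * dist x t + ε + Kg * dist x t := by
        rw [dist_comm (g t)]
        linarith [hf.dist_le_mul x hx t ht, hg.dist_le_mul x hx t ht]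
    _ = ε + (Kf + Kg) * dist x t := by ring
    _ ≤ ε + (Kf + Kg) * Δ := by gcongr

noncomputable def autocorrelation (h : ℝ → ℝ) (k : ℤ) : ℂ :=
  (1 / (2 * (π : ℂ))) * ∫ ω in (-π)..π, (h ω : ℂ) * exp (I * (ω : ℂ) * (k : ℂ))

theorem norm_exp_I_mul_ofReal_mul_intCast (ω : ℝ) (k : ℤ) :
    ‖exp (I * (ω : ℂ) * (k : ℂ))‖ = 1 := by
  simp [Complex.norm_exp]

theorem norm_autocorrelation_le {h : ℝ → ℝ} {B : ℝ} (hB : ∀ ω ∈ Icc (-π) π, |h ω| ≤ B)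
    (k : ℤ) : ‖autocorrelation h k‖ ≤ B := by
  have hint : ‖∫ ω in (-π)..π, (h ω : ℂ) * exp (I * (ω : ℂ) * (k : ℂ))‖ ≤ B * |π - -π| :=
    intervalIntegral.norm_integral_le_of_norm_le_const fun ω hω => by
      rw [uIoc_of_le (by linarith [pi_pos])] at hω
      simpa [norm_exp_I_mul_ofReal_mul_intCast] using hB ω (Ioc_subset_Icc_self hω)
  have hlen : |π - -π| = 2 * π := by rw [sub_neg_eq_add, ← two_mul, abs_of_pos two_pi_pos]
  have hconst : ‖1 / (2 * (π : ℂ))‖ = 1 / (2 * π) := by simp [abs_of_pos pi_pos]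
  rw [hlen] at hint
  rw [autocorrelation, norm_mul, hconst]
  calc 1 / (2 * π) * ‖_‖ ≤ 1 / (2 * π) * (B * (2 * π)) := by gcongr
    _ = B := by field_simp

theorem autocorrelation_sub {f g : ℝ → ℝ} (hf : IntervalIntegrable f volume (-π) π)
    (hg : IntervalIntegrable g volume (-π) π) (k : ℤ) :
    autocorrelation g k - autocorrelation f k = autocorrelation (g - f) k := by
  have hphase : ContinuousOn (fun ω : ℝ => exp (I * (ω : ℂ) * (k : ℂ))) (uIcc (-π) π) := by
    fun_prop
  have hf' := IntervalIntegrable.mul_continuousOn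
    (f := fun ω => (f ω : ℂ)) ⟨hf.1.ofReal, hf.2.ofReal⟩ hphase
  have hg' := IntervalIntegrable.mul_continuousOn
    (f := fun ω => (g ω : ℂ)) ⟨hg.1.ofReal, hg.2.ofReal⟩ hphase
  simp only [autocorrelation, ← mul_sub, ← intervalIntegral.integral_sub hg' hf', Pi.sub_apply,
    ofReal_sub, sub_mul]

theorem acf_close_of_psd_close_on_grid_general (f g : ℝ → ℝ) (ℓf ℓg : ℝ)
    (hf : ∀ a ∈ Set.Icc (-Real.pi) Real.pi, ∀ b ∈ Set.Icc (-Real.pi) Real.pi,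
      |f a - f b| ≤ ℓf * |a - b|)
    (hg : ∀ a ∈ Set.Icc (-Real.pi) Real.pi, ∀ b ∈ Set.Icc (-Real.pi) Real.pi,
      |g a - g b| ≤ ℓg * |a - b|)
    (T : Finset ℝ) (hTsub : (T : Set ℝ) ⊆ Set.Icc (-Real.pi) Real.pi)
    (Δ : ℝ)
    (hcover : ∀ ω ∈ Set.Icc (-Real.pi) Real.pi, ∃ t ∈ T, |ω - t| ≤ Δ)
    (ε : ℝ)
    (hclose : ∀ t ∈ T, |f t - g t| ≤ ε)
    (rf rg : ℤ → ℂ)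
    (hrf : ∀ k : ℤ, rf k =
      (1 / (2 * (Real.pi : ℂ))) *
        ∫ ω in (-Real.pi)..Real.pi, (f ω : ℂ) * Complex.exp (Complex.I * (ω : ℂ) * (k : ℂ)))
    (hrg : ∀ k : ℤ, rg k =
      (1 / (2 * (Real.pi : ℂ))) *
        ∫ ω in (-Real.pi)..Real.pi, (g ω : ℂ) * Complex.exp (Complex.I * (ω : ℂ) * (k : ℂ))) :
    (∀ (K : ℕ) (k : ℤ), |k| ≤ (K : ℤ) →
        ‖rg k - rf k‖ ≤ ε + (ℓf + ℓg) * Δ) ∧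
    (0 < ε → ∀ (K : ℕ) (k : ℤ), |k| ≤ (K : ℤ) →
        ‖rg k - rf k‖ ≤ (1 + (ℓf + ℓg) * Δ / ε) * ε) := by
  obtain rfl : rf = autocorrelation f := funext hrf
  obtain rfl : rg = autocorrelation g := funext hrg
  have hle : -π ≤ π := by linarith [pi_pos]
  have hℓf : 0 ≤ ℓf := nonneg_of_abs_sub_le_mul_abs_sub (by linarith [pi_pos])
    (hf _ (left_mem_Icc.2 hle) _ (right_mem_Icc.2 hle))
  have hℓg : 0 ≤ ℓg := nonneg_of_abs_sub_le_mul_abs_sub (by linarith [pi_pos])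
    (hg _ (left_mem_Icc.2 hle) _ (right_mem_Icc.2 hle))
  have lipf := lipschitzOnWith_of_abs_sub_le hℓf hf
  have lipg := lipschitzOnWith_of_abs_sub_le hℓg hg
  have hpsd : ∀ ω ∈ Icc (-π) π, |(g - f) ω| ≤ ε + (ℓf + ℓg) * Δ := fun ω hω => by
    obtain ⟨t, ht, hωt⟩ := hcover ω hω
    have := lipf.dist_le_of_dist_le_at lipg hω (hTsub ht) hωt (hclose t ht)
    rwa [Real.coe_toNNReal _ hℓf, Real.coe_toNNReal _ hℓg, Real.dist_eq, abs_sub_comm] at this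
  have hacf (k : ℤ) : ‖autocorrelation g k - autocorrelation f k‖ ≤ ε + (ℓf + ℓg) * Δ := by
    rw [autocorrelation_sub (lipf.continuousOn.intervalIntegrable_of_Icc hle)
      (lipg.continuousOn.intervalIntegrable_of_Icc hle)]
    exact norm_autocorrelation_le hpsd k
  refine ⟨fun _ k _ => hacf k, fun hε _ k _ => ?_⟩
  rw [add_mul, one_mul, div_mul_cancel₀ _ hε.ne']
  exact hacf k

/-- Deterministic content of Theorem 1 (Steps 2–4): if two power spectral densities
`f`, `g` are Lipschitz on `[-π, π]` with constants `ℓf`, `ℓg`, are `ε`-close on a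
finite nonempty `Δ`-net `T ⊆ [-π, π]`, then for every maximum lag `K` and every
integer `k` with `|k| ≤ K` the corresponding autocorrelations
`r_h(k) = (1/(2π))∫_{-π}^{π} h(ω) e^{iωk} dω` satisfy
`|r_g(k) - r_f(k)| ≤ ε + (ℓf + ℓg)·Δ`; in particular, when `ε > 0`, with
`C = 1 + (ℓf + ℓg)·Δ/ε` one has `|r_g(k) - r_f(k)| ≤ C·ε` for all `|k| ≤ K`. -/
theorem acf_close_of_psd_close_on_grid (f g : ℝ → ℝ) (ℓf ℓg : ℝ)
    (hf : ∀ a ∈ Set.Icc (-Real.pi) Real.pi, ∀ b ∈ Set.Icc (-Real.pi) Real.pi,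
      |f a - f b| ≤ ℓf * |a - b|)
    (hg : ∀ a ∈ Set.Icc (-Real.pi) Real.pi, ∀ b ∈ Set.Icc (-Real.pi) Real.pi,
      |g a - g b| ≤ ℓg * |a - b|)
    (T : Finset ℝ) (hTne : T.Nonempty) (hTsub : (T : Set ℝ) ⊆ Set.Icc (-Real.pi) Real.pi)
    (Δ : ℝ) (hΔ : 0 ≤ Δ)
    (hcover : ∀ ω ∈ Set.Icc (-Real.pi) Real.pi, ∃ t ∈ T, |ω - t| ≤ Δ)
    (ε : ℝ) (hε : 0 ≤ ε)
    (hclose : ∀ t ∈ T, |f t - g t| ≤ ε)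
    (rf rg : ℤ → ℂ)
    (hrf : ∀ k : ℤ, rf k =
      (1 / (2 * (Real.pi : ℂ))) *
        ∫ ω in (-Real.pi)..Real.pi, (f ω : ℂ) * Complex.exp (Complex.I * (ω : ℂ) * (k : ℂ)))
    (hrg : ∀ k : ℤ, rg k =
      (1 / (2 * (Real.pi : ℂ))) *
        ∫ ω in (-Real.pi)..Real.pi, (g ω : ℂ) * Complex.exp (Complex.I * (ω : ℂ) * (k : ℂ))) :
    (∀ (K : ℕ) (k : ℤ), |k| ≤ (K : ℤ) →
        ‖rg k - rf k‖ ≤ ε + (ℓf + ℓg) * Δ) ∧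
    (0 < ε → ∀ (K : ℕ) (k : ℤ), |k| ≤ (K : ℤ) →
        ‖rg k - rf k‖ ≤ (1 + (ℓf + ℓg) * Δ / ε) * ε) :=
  acf_close_of_psd_close_on_grid_general f g ℓf ℓg hf hg T hTsub Δ hcover ε hclose rf rg hrf hrg
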